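/- Hanner's inequality (case p ≥ 2): for all f, g ∈ L_p, ‖f+g‖_p^p + ‖f-g‖_p^p ≤ (‖f‖_p + ‖g‖_p)^p + |‖f‖_p - ‖g‖_p|^p. -/

import Mathlib

open MeasureTheory

/-- The real-valued `L_p` norm (via `eLpNorm`). -/
noncomputable def LpNorm {Z : Type*} [MeasurableSpace Z] (μ : Measure Z)
    (f : Z → ℝ) (p : ℝ) : ℝ :=
  (eLpNorm f (ENNReal.ofReal p) μ).toReal

/-! Hanner's argument. For `0 < r ≤ 1` let
`α(r) = (1+r)^(p-1) + (1-r)^(p-1)` and `β(r) = ((1+r)^(p-1) - (1-r)^(p-1)) / r^(p-1)`.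
For `p ≥ 2` the pointwise inequality `|a+b|^p + |a-b|^p ≤ α(r)|a|^p + β(r)|b|^p` holds for all
reals `a, b`, with equality when `0 ≤ b = r a`. By homogeneity, symmetry and `α ≤ β` it reduces
to `0 ≤ t ≤ 1`, where `t ↦ α(r) + β(r) t^p - (1+t)^p - (1-t)^p` has derivative
`p t^(p-1) (β(r) - β(t))`; since `β` is decreasing this function is minimal at `t = r`, where it
vanishes. Integrating the pointwise inequality with `r = ‖g‖_p / ‖f‖_p` (for `‖g‖_p ≤ ‖f‖_p`)
turns its right-hand side into `(‖f‖_p + ‖g‖_p)^p + (‖f‖_p - ‖g‖_p)^p`. -/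

open Real Set

lemma abs_add_abs_sub_eq (φ : ℝ → ℝ) (a b : ℝ) :
    φ |a + b| + φ |a - b| = φ (|a| + |b|) + φ |(|a| - |b|)| := by
  rcases le_total 0 a with ha | ha <;> rcases le_total 0 b with hb | hb <;>
    rcases le_total |a| |b| with h | h <;> grind

lemma monotoneOn_add_one_rpow_sub_sub_one_rpow {q : ℝ} (hq : 1 ≤ q) :
    MonotoneOn (fun s : ℝ => (s + 1) ^ q - (s - 1) ^ q) (Ici 1) := by
  have hderiv (s : ℝ) : HasDerivAt (fun s : ℝ => (s + 1) ^ q - (s - 1) ^ q)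
      (1 * q * (s + 1) ^ (q - 1) - 1 * q * (s - 1) ^ (q - 1)) s :=
    (((hasDerivAt_id s).add_const 1).rpow_const (Or.inr hq)).sub
      (((hasDerivAt_id s).sub_const 1).rpow_const (Or.inr hq))
  refine monotoneOn_of_hasDerivWithinAt_nonneg (convex_Ici 1)
    (fun s _ => (hderiv s).continuousAt.continuousWithinAt)
    (fun s _ => (hderiv s).hasDerivWithinAt) fun s hs => ?_
  rw [interior_Ici, mem_Ioi] at hs
  have : (s - 1) ^ (q - 1) ≤ (s + 1) ^ (q - 1) :=
    rpow_le_rpow (by linarith) (by linarith) (by linarith)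
  nlinarith

lemma rpow_eq_rpow_mul_div_rpow {p x y : ℝ} (hx : 0 < x) (hy : 0 ≤ y) :
    y ^ p = x ^ p * (y / x) ^ p := by
  rw [div_rpow hy hx.le, mul_div_cancel₀ _ (rpow_pos_of_pos hx p).ne']

lemma add_rpow_add_sub_rpow_eq {p x y : ℝ} (hx : 0 < x) (hy : 0 ≤ y) (hyx : y ≤ x) :
    (x + y) ^ p + (x - y) ^ p = x ^ p * ((1 + y / x) ^ p + (1 - y / x) ^ p) := by
  rw [rpow_eq_rpow_mul_div_rpow hx (by linarith : 0 ≤ x + y),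
    rpow_eq_rpow_mul_div_rpow hx (by linarith : 0 ≤ x - y), add_div, sub_div, div_self hx.ne']
  ring

namespace Hanner

noncomputable def alpha (p r : ℝ) : ℝ := (1 + r) ^ (p - 1) + (1 - r) ^ (p - 1)

noncomputable def beta (p r : ℝ) : ℝ := ((1 + r) ^ (p - 1) - (1 - r) ^ (p - 1)) / r ^ (p - 1)

variable {p r : ℝ}

lemma beta_mul_rpow (hr : 0 < r) :
    beta p r * r ^ (p - 1) = (1 + r) ^ (p - 1) - (1 - r) ^ (p - 1) :=
  div_mul_cancel₀ _ (rpow_pos_of_pos hr _).ne'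

lemma alpha_le_beta (hp : 2 ≤ p) (hr0 : 0 < r) (hr1 : r ≤ 1) : alpha p r ≤ beta p r := by
  have hq : 1 ≤ p - 1 := by linarith
  have h1 : (r + r * r) ^ (p - 1) + (r - r * r) ^ (p - 1) ≤ (2 * r) ^ (p - 1) := by
    convert add_rpow_le_rpow_add (a := r + r * r) (b := r - r * r) (by positivity) (by nlinarith)
      hq using 2; ring
  have h2 : (1 - r) ^ (p - 1) + (2 * r) ^ (p - 1) ≤ (1 + r) ^ (p - 1) := by
    convert add_rpow_le_rpow_add (a := 1 - r) (b := 2 * r) (by linarith) (by linarith) hq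
      using 2; ring
  have e1 : (1 + r) ^ (p - 1) * r ^ (p - 1) = (r + r * r) ^ (p - 1) := by
    rw [← mul_rpow (by linarith) hr0.le]; ring_nf
  have e2 : (1 - r) ^ (p - 1) * r ^ (p - 1) = (r - r * r) ^ (p - 1) := by
    rw [← mul_rpow (by linarith) hr0.le]; ring_nf
  rw [alpha, beta, le_div_iff₀ (rpow_pos_of_pos hr0 _), add_mul, e1, e2]
  linarith

lemma beta_eq (hr0 : 0 < r) (hr1 : r ≤ 1) :
    beta p r = (r⁻¹ + 1) ^ (p - 1) - (r⁻¹ - 1) ^ (p - 1) := by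
  rw [beta, sub_div, ← div_rpow (by linarith) hr0.le, ← div_rpow (by linarith) hr0.le]
  congr 2 <;> field_simp

lemma antitoneOn_beta (hp : 2 ≤ p) : AntitoneOn (beta p) (Ioc 0 1) := by
  intro s hs t ht hst
  rw [beta_eq hs.1 hs.2, beta_eq ht.1 ht.2]
  exact monotoneOn_add_one_rpow_sub_sub_one_rpow (by linarith)
    (one_le_inv₀ ht.1 |>.2 ht.2) (one_le_inv₀ hs.1 |>.2 hs.2) (inv_anti₀ hs.1 hst)

lemma alpha_add_beta_mul_rpow_self (hp : 0 < p) (hr0 : 0 < r) (hr1 : r ≤ 1) :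
    alpha p r + beta p r * r ^ p = (1 + r) ^ p + (1 - r) ^ p := by
  have hsucc (x : ℝ) (hx : 0 ≤ x) : x ^ p = x ^ (p - 1) * x := by
    rw [← rpow_add_one' hx (by linarith), sub_add_cancel]
  rw [hsucc r hr0.le, hsucc (1 + r) (by linarith), hsucc (1 - r) (by linarith), alpha,
    ← mul_assoc, beta_mul_rpow hr0]
  ring

lemma one_add_rpow_add_one_sub_rpow_le (hp : 2 ≤ p) (hr0 : 0 < r) (hr1 : r ≤ 1) {t : ℝ}
    (ht : t ∈ Icc 0 1) : (1 + t) ^ p + (1 - t) ^ p ≤ alpha p r + beta p r * t ^ p := by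
  have hp1 : 1 ≤ p := by linarith
  set G : ℝ → ℝ := fun t => alpha p r + beta p r * t ^ p - ((1 + t) ^ p + (1 - t) ^ p)
  have hG (t : ℝ) : HasDerivAt G (beta p r * (p * t ^ (p - 1))
      - (1 * p * (1 + t) ^ (p - 1) + -1 * p * (1 - t) ^ (p - 1))) t :=
    (((hasDerivAt_rpow_const (Or.inr hp1)).const_mul _).const_add _).sub
      ((((hasDerivAt_id t).const_add 1).rpow_const (Or.inr hp1)).add
        (((hasDerivAt_id t).const_sub 1).rpow_const (Or.inr hp1)))
  have hG' {t : ℝ} (ht : 0 < t) : deriv G t = p * t ^ (p - 1) * (beta p r - beta p t) := by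
    rw [(hG t).deriv]
    linear_combination p * beta_mul_rpow (p := p) ht
  have hmin : IsMinOn G (Icc 0 1) r := by
    refine isMinOn_Icc_of_deriv (hG 0).continuousAt (hG r).continuousAt (hG 1).continuousAt
      (fun x _ => (hG x).differentiableAt.differentiableWithinAt)
      (fun x _ => (hG x).differentiableAt.differentiableWithinAt) (fun x hx => ?_) fun x hx => ?_
    · rw [hG' hx.1]
      have : beta p r ≤ beta p x :=
        antitoneOn_beta hp ⟨hx.1, hx.2.le.trans hr1⟩ ⟨hr0, hr1⟩ hx.2.le
      exact mul_nonpos_of_nonneg_of_nonpos (mul_nonneg (by linarith) (rpow_nonneg hx.1.le _))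
        (by linarith)
    · have hx0 : 0 < x := hr0.trans hx.1
      rw [hG' hx0]
      have : beta p x ≤ beta p r := antitoneOn_beta hp ⟨hr0, hr1⟩ ⟨hx0, hx.2.le⟩ hx.1.le
      exact mul_nonneg (mul_nonneg (by linarith) (rpow_nonneg hx0.le _)) (by linarith)
  have hGr : G r = 0 := by
    simp only [G]
    rw [alpha_add_beta_mul_rpow_self (by linarith) hr0 hr1, sub_self]
  have := isMinOn_iff.mp hmin t ht
  simp only [G, hGr] at this
  linarith

lemma add_rpow_add_sub_rpow_le (hp : 2 ≤ p) (hr0 : 0 < r) (hr1 : r ≤ 1) {x y : ℝ}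
    (hy : 0 ≤ y) (hyx : y ≤ x) :
    (x + y) ^ p + (x - y) ^ p ≤ alpha p r * x ^ p + beta p r * y ^ p := by
  rcases (hy.trans hyx).eq_or_lt with rfl | hx
  · obtain rfl : y = 0 := le_antisymm hyx hy
    simp [zero_rpow (by positivity : p ≠ 0)]
  rw [add_rpow_add_sub_rpow_eq hx hy hyx, rpow_eq_rpow_mul_div_rpow hx hy]
  have := one_add_rpow_add_one_sub_rpow_le hp hr0 hr1
    ⟨div_nonneg hy hx.le, div_le_one_of_le₀ hyx hx.le⟩
  nlinarith [rpow_pos_of_pos hx p]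

lemma alpha_mul_add_beta_mul_eq (hp : 0 < p) {x y : ℝ} (hy : 0 < y) (hyx : y ≤ x) :
    alpha p (y / x) * x ^ p + beta p (y / x) * y ^ p = (x + y) ^ p + (x - y) ^ p := by
  have hx := hy.trans_le hyx
  rw [add_rpow_add_sub_rpow_eq hx hy.le hyx, rpow_eq_rpow_mul_div_rpow hx hy.le,
    ← alpha_add_beta_mul_rpow_self hp (div_pos hy hx) (div_le_one_of_le₀ hyx hx.le)]
  ring

lemma abs_add_rpow_add_abs_sub_rpow_le (hp : 2 ≤ p) (hr0 : 0 < r) (hr1 : r ≤ 1) (a b : ℝ) :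
    |a + b| ^ p + |a - b| ^ p ≤ alpha p r * |a| ^ p + beta p r * |b| ^ p := by
  rw [abs_add_abs_sub_eq (· ^ p)]
  rcases le_total |b| |a| with h | h
  · rw [abs_of_nonneg (sub_nonneg.mpr h)]
    exact add_rpow_add_sub_rpow_le hp hr0 hr1 (abs_nonneg b) h
  · rw [abs_sub_comm, abs_of_nonneg (sub_nonneg.mpr h), add_comm |a|]
    have := add_rpow_add_sub_rpow_le hp hr0 hr1 (abs_nonneg a) h
    have hab : |a| ^ p ≤ |b| ^ p := rpow_le_rpow (abs_nonneg a) h (by linarith)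
    nlinarith [alpha_le_beta hp hr0 hr1]

end Hanner

section LpNorm

variable {Z : Type*} [MeasurableSpace Z] {μ : Measure Z} {p : ℝ} {f g : Z → ℝ}

lemma LpNorm_nonneg : 0 ≤ LpNorm μ f p := ENNReal.toReal_nonneg

lemma LpNorm_sub_comm : LpNorm μ (f - g) p = LpNorm μ (g - f) p := by
  rw [LpNorm, LpNorm, eLpNorm_sub_comm]

lemma LpNorm_congr_ae (h : f =ᵐ[μ] g) : LpNorm μ f p = LpNorm μ g p := by
  rw [LpNorm, LpNorm, eLpNorm_congr_ae h]

lemma MeasureTheory.MemLp.ae_eq_zero_of_LpNorm_eq_zero (hp : 0 < p)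
    (hf : MemLp f (ENNReal.ofReal p) μ) (h : LpNorm μ f p = 0) : f =ᵐ[μ] 0 := by
  refine (eLpNorm_eq_zero_iff hf.1 (ENNReal.ofReal_pos.mpr hp).ne').mp ?_
  exact (ENNReal.toReal_eq_zero_iff _).mp h |>.resolve_right hf.2.ne

lemma MeasureTheory.MemLp.integrable_abs_rpow (hp : 0 < p)
    (hf : MemLp f (ENNReal.ofReal p) μ) :
    Integrable (fun z => |f z| ^ p) μ := by
  simpa [ENNReal.toReal_ofReal hp.le] using
    hf.integrable_norm_rpow (ENNReal.ofReal_pos.mpr hp).ne' ENNReal.ofReal_ne_top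

lemma MeasureTheory.MemLp.LpNorm_rpow_eq_integral (hp : 0 < p)
    (hf : MemLp f (ENNReal.ofReal p) μ) :
    LpNorm μ f p ^ p = ∫ z, |f z| ^ p ∂μ := by
  have hint : 0 ≤ ∫ z, |f z| ^ p ∂μ := integral_nonneg fun z => rpow_nonneg (abs_nonneg _) _
  rw [LpNorm, hf.eLpNorm_eq_integral_rpow_norm (ENNReal.ofReal_pos.mpr hp).ne'
    ENNReal.ofReal_ne_top]
  simp only [ENNReal.toReal_ofReal hp.le, Real.norm_eq_abs]
  rw [ENNReal.toReal_ofReal (rpow_nonneg hint _), ← rpow_mul hint, inv_mul_cancel₀ hp.ne',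
    rpow_one]

lemma hanner_of_LpNorm_eq_zero (hp : 0 < p) (hg : MemLp g (ENNReal.ofReal p) μ)
    (hg0 : LpNorm μ g p = 0) :
    LpNorm μ (f + g) p ^ p + LpNorm μ (f - g) p ^ p ≤
      (LpNorm μ f p + LpNorm μ g p) ^ p + |LpNorm μ f p - LpNorm μ g p| ^ p := by
  have hg0' := hg.ae_eq_zero_of_LpNorm_eq_zero hp hg0
  have hadd : LpNorm μ (f + g) p = LpNorm μ f p :=
    LpNorm_congr_ae (by filter_upwards [hg0'] with z hz; simp [hz])
  have hsub : LpNorm μ (f - g) p = LpNorm μ f p :=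
    LpNorm_congr_ae (by filter_upwards [hg0'] with z hz; simp [hz])
  rw [hadd, hsub, hg0, add_zero, sub_zero, abs_of_nonneg LpNorm_nonneg]

lemma hanner_of_pos_of_le (hp : 2 ≤ p) (hf : MemLp f (ENNReal.ofReal p) μ)
    (hg : MemLp g (ENNReal.ofReal p) μ) (hg0 : 0 < LpNorm μ g p)
    (hgf : LpNorm μ g p ≤ LpNorm μ f p) :
    LpNorm μ (f + g) p ^ p + LpNorm μ (f - g) p ^ p ≤
      (LpNorm μ f p + LpNorm μ g p) ^ p + |LpNorm μ f p - LpNorm μ g p| ^ p := by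
  have hp0 : 0 < p := by linarith
  set r := LpNorm μ g p / LpNorm μ f p
  have hf0 := hg0.trans_le hgf
  have hr0 : 0 < r := div_pos hg0 hf0
  have hr1 : r ≤ 1 := div_le_one_of_le₀ hgf hf0.le
  have hfp := hf.integrable_abs_rpow hp0
  have hgp := hg.integrable_abs_rpow hp0
  have hadd := (hf.add hg).integrable_abs_rpow hp0
  have hsub := (hf.sub hg).integrable_abs_rpow hp0
  calc LpNorm μ (f + g) p ^ p + LpNorm μ (f - g) p ^ p
      = ∫ z, (|f z + g z| ^ p + |f z - g z| ^ p) ∂μ := by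
        rw [(hf.add hg).LpNorm_rpow_eq_integral hp0, (hf.sub hg).LpNorm_rpow_eq_integral hp0,
          ← integral_add hadd hsub]
        rfl
    _ ≤ ∫ z, (Hanner.alpha p r * |f z| ^ p + Hanner.beta p r * |g z| ^ p) ∂μ :=
        integral_mono (hadd.add hsub) ((hfp.const_mul _).add (hgp.const_mul _))
          fun z => Hanner.abs_add_rpow_add_abs_sub_rpow_le hp hr0 hr1 (f z) (g z)
    _ = Hanner.alpha p r * LpNorm μ f p ^ p + Hanner.beta p r * LpNorm μ g p ^ p := by
        rw [integral_add (hfp.const_mul _) (hgp.const_mul _), integral_const_mul,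
          integral_const_mul, hf.LpNorm_rpow_eq_integral hp0, hg.LpNorm_rpow_eq_integral hp0]
    _ = (LpNorm μ f p + LpNorm μ g p) ^ p + |LpNorm μ f p - LpNorm μ g p| ^ p := by
        rw [abs_of_nonneg (sub_nonneg.mpr hgf)]
        exact Hanner.alpha_mul_add_beta_mul_eq hp0 hg0 hgf

lemma hanner_of_LpNorm_le (hp : 2 ≤ p) (hf : MemLp f (ENNReal.ofReal p) μ)
    (hg : MemLp g (ENNReal.ofReal p) μ) (hgf : LpNorm μ g p ≤ LpNorm μ f p) :
    LpNorm μ (f + g) p ^ p + LpNorm μ (f - g) p ^ p ≤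
      (LpNorm μ f p + LpNorm μ g p) ^ p + |LpNorm μ f p - LpNorm μ g p| ^ p := by
  rcases (LpNorm_nonneg : 0 ≤ LpNorm μ g p).eq_or_lt with hg0 | hg0
  · exact hanner_of_LpNorm_eq_zero (by linarith) hg hg0.symm
  · exact hanner_of_pos_of_le hp hf hg hg0 hgf

end LpNorm

/-- Hanner's inequality for `p ≥ 2`:
`‖f+g‖_p^p + ‖f-g‖_p^p ≤ (‖f‖_p + ‖g‖_p)^p + |‖f‖_p - ‖g‖_p|^p`. -/
theorem hanner_inequality_large_p {Z : Type*} [MeasurableSpace Z] (μ : Measure Z)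
    (p : ℝ) (hp : 2 ≤ p)
    (f g : Z → ℝ)
    (hf : MemLp f (ENNReal.ofReal p) μ) (hg : MemLp g (ENNReal.ofReal p) μ) :
    LpNorm μ (f + g) p ^ p + LpNorm μ (f - g) p ^ p ≤
      (LpNorm μ f p + LpNorm μ g p) ^ p + |LpNorm μ f p - LpNorm μ g p| ^ p := by
  rcases le_total (LpNorm μ g p) (LpNorm μ f p) with hgf | hfg
  · exact hanner_of_LpNorm_le hp hf hg hgf
  · have := hanner_of_LpNorm_le hp hg hf hfg
    rwa [add_comm g f, LpNorm_sub_comm, add_comm (LpNorm μ g p), abs_sub_comm] at this
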